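/- arXiv:2312.15286 — 3 statements merged into one kernel-verified Lean document; each statement's English description precedes it below -/
import Mathlib

section
/- Let m ≥ 1 and let x_1, …, x_m be distinct real numbers, and let V = V(x_1,…,x_m) be the associated m×m Vandermonde matrix (entries V_{ij} = x_i^{j-1}). Then the ℓ1 operator norm of V^{-1} satisfies ‖V^{-1}‖_{op} ≤ max_{i∈[m]} ∏_{j≠i} (1+|x_j|)/|x_j − x_i|. -/
/-!
The columns of `V⁻¹` are the coefficient vectors of the Lagrange basis polynomials
`ℓ_j = ∏_{k ≠ j} (X - x_k) / (x_j - x_k)`, since `V` evaluates a coefficient vector at the nodes.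
Multiplying a polynomial by `X - a` increases the ℓ¹ norm of its coefficients at most by the
factor `1 + |a|`, so the `j`-th column has ℓ¹ norm at most `∏_{k ≠ j} (1 + |x_k|) / |x_k - x_j|`.
-/

open Matrix Finset

/-- The ℓ1 operator norm of a square matrix: the maximum over columns of the
sum of absolute values of the entries in that column. -/
noncomputable def l1OpNorm {m : ℕ} (A : Matrix (Fin m) (Fin m) ℝ) : ℝ :=
  ⨆ j : Fin m, ∑ i : Fin m, |A i j|

open Polynomial

theorem Polynomial.sum_range_norm_coeff_mul_X_le {R : Type*} [SeminormedRing R] (p : R[X])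
    (N : ℕ) : ∑ n ∈ range N, ‖(p * X).coeff n‖ ≤ ∑ n ∈ range N, ‖p.coeff n‖ := by
  cases N with
  | zero => simp
  | succ N =>
    rw [sum_range_succ', sum_range_succ]
    simp only [coeff_mul_X, mul_coeff_zero, coeff_X_zero, mul_zero, norm_zero, add_zero]
    exact le_add_of_nonneg_right (norm_nonneg _)

theorem Polynomial.sum_range_norm_coeff_mul_X_sub_C_le {R : Type*} [SeminormedRing R]
    (p : R[X]) (a : R) (N : ℕ) :
    ∑ n ∈ range N, ‖(p * (X - C a)).coeff n‖ ≤ (1 + ‖a‖) * ∑ n ∈ range N, ‖p.coeff n‖ := by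
  have hcoeff (n : ℕ) : ‖(p * (X - C a)).coeff n‖ ≤ ‖(p * X).coeff n‖ + ‖p.coeff n‖ * ‖a‖ := by
    rw [mul_sub, coeff_sub, coeff_mul_C]
    exact (norm_sub_le _ _).trans (by gcongr; exact norm_mul_le _ _)
  calc ∑ n ∈ range N, ‖(p * (X - C a)).coeff n‖
      ≤ ∑ n ∈ range N, ‖(p * X).coeff n‖ + (∑ n ∈ range N, ‖p.coeff n‖) * ‖a‖ := by
        rw [sum_mul, ← sum_add_distrib]
        exact sum_le_sum fun n _ => hcoeff n
    _ ≤ (1 + ‖a‖) * ∑ n ∈ range N, ‖p.coeff n‖ := by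
        linarith [sum_range_norm_coeff_mul_X_le p N]

theorem Lagrange.sum_range_norm_coeff_mul_basisDivisor_le {F : Type*} [NormedField F]
    (p : F[X]) (x y : F) (N : ℕ) :
    ∑ n ∈ range N, ‖(p * basisDivisor x y).coeff n‖ ≤
      (1 + ‖y‖) / ‖y - x‖ * ∑ n ∈ range N, ‖p.coeff n‖ := by
  have hcoeff (n : ℕ) :
      ‖(p * basisDivisor x y).coeff n‖ = ‖y - x‖⁻¹ * ‖(p * (X - C y)).coeff n‖ := by
    rw [basisDivisor, mul_left_comm, coeff_C_mul, norm_mul, norm_inv, norm_sub_rev]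
  simp_rw [hcoeff, ← mul_sum, div_eq_inv_mul, mul_assoc]
  exact mul_le_mul_of_nonneg_left (sum_range_norm_coeff_mul_X_sub_C_le p y N) (by positivity)

theorem Lagrange.sum_range_norm_coeff_basis_le {F : Type*} [NormedField F] {ι : Type*}
    [DecidableEq ι] (s : Finset ι) (v : ι → F) (i : ι) (N : ℕ) :
    ∑ n ∈ range N, ‖(Lagrange.basis s v i).coeff n‖ ≤
      ∏ k ∈ s.erase i, (1 + ‖v k‖) / ‖v k - v i‖ := by
  rw [Lagrange.basis]
  induction s.erase i using Finset.induction with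
  | empty =>
    cases N with
    | zero => simp
    | succ N => simp [sum_range_succ', coeff_one]
  | insert k t hk ih =>
    rw [prod_insert hk, prod_insert hk, mul_comm (basisDivisor _ _)]
    exact (sum_range_norm_coeff_mul_basisDivisor_le _ _ _ N).trans
      (mul_le_mul_of_nonneg_left ih (by positivity))

theorem Matrix.vandermonde_mul_coeff_lagrange_basis {F : Type*} [Field F] {m : ℕ}
    {v : Fin m → F} (hv : Function.Injective v) :
    vandermonde v * Matrix.of (fun i j : Fin m => (Lagrange.basis univ v j).coeff i) = 1 := by
  ext i j
  have hdeg : (Lagrange.basis univ v j).natDegree < m := by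
    rw [Lagrange.natDegree_basis hv.injOn (mem_univ j), card_univ, Fintype.card_fin]
    exact Nat.sub_lt_self one_pos j.pos
  rw [mul_apply, one_apply]
  simp only [vandermonde_apply, of_apply]
  rw [Fin.sum_univ_eq_sum_range (fun n => v i ^ n * (Lagrange.basis univ v j).coeff n)]
  simp_rw [mul_comm (v i ^ _), ← eval_eq_sum_range' hdeg]
  split_ifs with hij
  · rw [hij, Lagrange.eval_basis_self hv.injOn (mem_univ j)]
  · exact Lagrange.eval_basis_of_ne (Ne.symm hij) (mem_univ i)

theorem Matrix.inv_vandermonde_apply {F : Type*} [Field F] {m : ℕ}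
    {v : Fin m → F} (hv : Function.Injective v) (i j : Fin m) :
    (vandermonde v)⁻¹ i j = (Lagrange.basis univ v j).coeff i := by
  rw [inv_eq_right_inv (vandermonde_mul_coeff_lagrange_basis hv), of_apply]

theorem l1OpNorm_inv_vandermonde_le_general (m : ℕ) (x : Fin m → ℝ)
    (hx : Function.Injective x) :
    l1OpNorm (Matrix.vandermonde x)⁻¹ ≤
      ⨆ i : Fin m, ∏ j ∈ Finset.univ.erase i, (1 + |x j|) / |x j - x i| := by
  rw [l1OpNorm]
  refine ciSup_mono (Set.finite_range _).bddAbove fun j => ?_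
  simp_rw [inv_vandermonde_apply hx, ← Real.norm_eq_abs]
  rw [Fin.sum_univ_eq_sum_range (fun n => ‖(Lagrange.basis univ x j).coeff n‖)]
  exact Lagrange.sum_range_norm_coeff_basis_le _ _ _ _

/-- Gautschi's bound on the ℓ1 operator norm of the inverse Vandermonde matrix:
for distinct reals `x 1, …, x m`,
`‖V(x)⁻¹‖_op ≤ max_i ∏_{j ≠ i} (1 + |x j|) / |x j - x i|`. -/
theorem l1OpNorm_inv_vandermonde_le (m : ℕ) (hm : 1 ≤ m) (x : Fin m → ℝ)
    (hx : Function.Injective x) :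
    l1OpNorm (Matrix.vandermonde x)⁻¹ ≤
      ⨆ i : Fin m, ∏ j ∈ Finset.univ.erase i, (1 + |x j|) / |x j - x i| :=
  l1OpNorm_inv_vandermonde_le_general m x hx
end

section
/- Let k ≥ 1 and let p = (p_0, p_1, …, p_k) ∈ [0,1]^{k+1} have distinct entries, with dispersion h(p) = min_{i≠j} |p_i − p_j|. Then the ℓ1 operator norm of the inverse Vandermonde matrix satisfies ‖V(p_0,…,p_k)^{-1}‖_{op} ≤ 2^k / h(p)^k. -/
open Matrix Finset

/-- The dispersion of a tuple of reals: `h(p) = min_{i ≠ j} |p i - p j|`. -/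
noncomputable def dispersion {n : ℕ} (p : Fin n → ℝ) : ℝ :=
  sInf {d : ℝ | ∃ i j, i ≠ j ∧ d = |p i - p j|}

/-!
The `j`-th column of `V(p)⁻¹` holds the coefficients of the Lagrange basis polynomial
`ℓ_j = w_j ∏_{m ≠ j} (X - p_m)` with weight `w_j = ∏_{m ≠ j} (p_j - p_m)⁻¹`. Each factor of
`w_j` is at most `1 / h(p)` in absolute value, and multiplying by `X - a` multiplies the
ℓ1 norm of the coefficient vector by at most `1 + |a| ≤ 2`.
-/

open Polynomial

namespace Polynomial

lemma sum_range_abs_coeff_X_mul_le (N : ℕ) (g : ℝ[X]) :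
    ∑ i ∈ range N, |(X * g).coeff i| ≤ ∑ i ∈ range N, |g.coeff i| := by
  cases N with
  | zero => simp
  | succ n =>
    rw [sum_range_succ', sum_range_succ]
    simp only [coeff_X_mul, mul_coeff_zero, coeff_X_zero, zero_mul, abs_zero, add_zero]
    exact le_add_of_nonneg_right (abs_nonneg _)

lemma sum_range_abs_coeff_X_sub_C_mul_le (N : ℕ) (a : ℝ) (g : ℝ[X]) :
    ∑ i ∈ range N, |((X - C a) * g).coeff i| ≤ (1 + |a|) * ∑ i ∈ range N, |g.coeff i| := by
  calc ∑ i ∈ range N, |((X - C a) * g).coeff i|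
      ≤ ∑ i ∈ range N, (|(X * g).coeff i| + |a| * |g.coeff i|) := by
        refine sum_le_sum fun i _ => ?_
        rw [sub_mul, coeff_sub, coeff_C_mul, ← abs_mul]
        exact abs_sub _ _
    _ ≤ ∑ i ∈ range N, |g.coeff i| + |a| * ∑ i ∈ range N, |g.coeff i| := by
        rw [sum_add_distrib, ← mul_sum]
        exact add_le_add_left (sum_range_abs_coeff_X_mul_le N g) _
    _ = (1 + |a|) * ∑ i ∈ range N, |g.coeff i| := by ring

end Polynomial

namespace Lagrange

lemma sum_range_abs_coeff_nodal_le {ι : Type*} (N : ℕ) (s : Finset ι) (v : ι → ℝ) :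
    ∑ i ∈ range N, |(nodal s v).coeff i| ≤ ∏ m ∈ s, (1 + |v m|) := by
  classical
  induction s using Finset.cons_induction with
  | empty => cases N <;> simp [nodal, sum_range_succ', coeff_one]
  | cons a s ha ih =>
    rw [nodal, prod_cons, prod_cons, ← nodal]
    exact (sum_range_abs_coeff_X_sub_C_mul_le N (v a) _).trans
      (mul_le_mul_of_nonneg_left ih (by positivity))

lemma basis_eq_C_nodalWeight_mul_nodal {F ι : Type*} [Field F] [DecidableEq ι]
    {s : Finset ι} {v : ι → F} {i : ι} (hi : i ∈ s) :
    Lagrange.basis s v i = C (nodalWeight s v i) * nodal (s.erase i) v := by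
  rw [basis_eq_prod_sub_inv_mul_nodal_div hi, nodal_erase_eq_nodal_div hi]

end Lagrange

namespace Matrix

theorem inv_vandermonde {F : Type*} [Field F] {n : ℕ} {v : Fin n → F}
    (hv : Function.Injective v) :
    (vandermonde v)⁻¹ = of fun i j : Fin n => (Lagrange.basis univ v j).coeff i := by
  have hvs : Set.InjOn v (univ : Finset (Fin n)) := hv.injOn
  refine inv_eq_right_inv (ext fun i j => ?_)
  have hdeg : (Lagrange.basis univ v j).natDegree < n := by
    rw [Lagrange.natDegree_basis hvs (mem_univ j), card_univ, Fintype.card_fin]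
    exact Nat.sub_lt (Nat.zero_lt_of_lt i.isLt) one_pos
  rw [mul_apply, one_apply]
  have hsum : ∑ m, vandermonde v i m * (of fun i j : Fin n => (Lagrange.basis univ v j).coeff i) m j
      = (Lagrange.basis univ v j).eval (v i) := by
    rw [eval_eq_sum_range' hdeg, ← Fin.sum_univ_eq_sum_range]
    exact sum_congr rfl fun m _ => mul_comm _ _
  rw [hsum]
  split_ifs with hij
  · subst hij
    exact Lagrange.eval_basis_self hvs (mem_univ i)
  · exact Lagrange.eval_basis_of_ne (Ne.symm hij) (mem_univ i)

end Matrix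

section Dispersion

variable {n : ℕ} {p : Fin n → ℝ}

lemma dispersion_le {i j : Fin n} (hij : i ≠ j) : dispersion p ≤ |p i - p j| :=
  csInf_le ⟨0, by rintro d ⟨_, _, _, rfl⟩; exact abs_nonneg _⟩ ⟨i, j, hij, rfl⟩

lemma dispersion_pos (hp : Function.Injective p) {i j : Fin n} (hij : i ≠ j) :
    0 < dispersion p := by
  set S : Set ℝ := {d | ∃ i j, i ≠ j ∧ d = |p i - p j|}
  have hfin : S.Finite :=
    (Set.finite_range fun ij : Fin n × Fin n => |p ij.1 - p ij.2|).subset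
      (by rintro d ⟨i, j, _, rfl⟩; exact ⟨(i, j), rfl⟩)
  have hne : S.Nonempty := ⟨_, i, j, hij, rfl⟩
  obtain ⟨i', j', hij', hd⟩ := hne.csInf_mem hfin
  rw [dispersion, hd]
  exact abs_pos.mpr (sub_ne_zero.mpr (hp.ne hij'))

lemma abs_nodalWeight_le_dispersion_inv_pow (hp : Function.Injective p) (j : Fin n) :
    |Lagrange.nodalWeight univ p j| ≤ (dispersion p)⁻¹ ^ (n - 1) := by
  rw [Lagrange.nodalWeight, abs_prod]
  calc ∏ m ∈ univ.erase j, |(p j - p m)⁻¹|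
      ≤ ∏ _m ∈ univ.erase j, (dispersion p)⁻¹ := by
        refine prod_le_prod (fun _ _ => abs_nonneg _) fun m hm => ?_
        have hjm : j ≠ m := (ne_of_mem_erase hm).symm
        rw [abs_inv]
        exact inv_anti₀ (dispersion_pos hp hjm) (dispersion_le hjm)
    _ = (dispersion p)⁻¹ ^ (n - 1) := by
        rw [prod_const, card_erase_of_mem (mem_univ j), card_univ, Fintype.card_fin]

end Dispersion

theorem l1OpNorm_inv_vandermonde_le_dispersion_general (k : ℕ)
    (p : Fin (k + 1) → ℝ) (hp : ∀ i, p i ∈ Set.Icc (0 : ℝ) 1)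
    (hinj : Function.Injective p) :
    l1OpNorm (Matrix.vandermonde p)⁻¹ ≤ 2 ^ k / (dispersion p) ^ k := by
  rw [Matrix.inv_vandermonde hinj, l1OpNorm]
  refine ciSup_le fun j => ?_
  have hcoeff : ∑ i ∈ range (k + 1), |(Lagrange.nodal (univ.erase j) p).coeff i| ≤ 2 ^ k :=
    calc _ ≤ ∏ m ∈ univ.erase j, (1 + |p m|) := Lagrange.sum_range_abs_coeff_nodal_le _ _ _
      _ ≤ ∏ _m ∈ univ.erase j, (2 : ℝ) := by
          refine prod_le_prod (fun _ _ => by positivity) fun m _ => ?_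
          rw [abs_of_nonneg (hp m).1]
          linarith [(hp m).2]
      _ = 2 ^ k := by simp [prod_const, card_erase_of_mem]
  calc ∑ i, |(of fun i j : Fin (k + 1) => (Lagrange.basis univ p j).coeff i) i j|
      = |Lagrange.nodalWeight univ p j|
          * ∑ i ∈ range (k + 1), |(Lagrange.nodal (univ.erase j) p).coeff i| := by
        rw [mul_sum, ← Fin.sum_univ_eq_sum_range (fun i => _ * |(Lagrange.nodal _ p).coeff i|)]
        simp [Lagrange.basis_eq_C_nodalWeight_mul_nodal (mem_univ j), coeff_C_mul, abs_mul]
    _ ≤ (dispersion p)⁻¹ ^ k * 2 ^ k :=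
        mul_le_mul_of_nonneg (abs_nodalWeight_le_dispersion_inv_pow hinj j) hcoeff
          (abs_nonneg _) (by positivity)
    _ = 2 ^ k / dispersion p ^ k := by rw [inv_pow, inv_mul_eq_div]

/-- For distinct prices `p = (p_0, …, p_k)` in `[0,1]` with dispersion `h(p)`,
the ℓ1 operator norm of the inverse Vandermonde matrix is at most `2^k / h(p)^k`. -/
theorem l1OpNorm_inv_vandermonde_le_dispersion (k : ℕ) (hk : 1 ≤ k)
    (p : Fin (k + 1) → ℝ) (hp : ∀ i, p i ∈ Set.Icc (0 : ℝ) 1)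
    (hinj : Function.Injective p) :
    l1OpNorm (Matrix.vandermonde p)⁻¹ ≤ 2 ^ k / (dispersion p) ^ k :=
  l1OpNorm_inv_vandermonde_le_dispersion_general k p hp hinj
end

section
/- (Solution of the regret-balancing linear system.) Let s ≥ 2 be a real number, k ≥ 1 and m ≥ 1 integers, and suppose real numbers x, y, z_1, …, z_m satisfy: z_1 = x; z_{j+1} − (s/2)·z_j = x − s·k·y for every j = 1, …, m−1; 1 − (s/2)·z_m = x − s·k·y; and 1 − s·y = x. Then, writing S = ∑_{i=0}^{m−1} (s/2)^i, one has x = (1 + S·k) / (S·(k+1) + (s/2)^m). In particular, when s = 2, x = (mk + 1)/(m(k+1) + 1). -/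
/-! With `r = s / 2` and `c = x - s k y`, the constraints say that `x = z_1, z_2, …, z_m, 1`
follows the affine recurrence `w_{j+1} = r w_j + c`, so `1 = r^m x + S c`. The last constraint
gives `c = (k + 1) x - k`, which turns this into a linear equation for `x` whose coefficient
`S (k + 1) + r^m` is positive. -/

open Finset

theorem affine_recurrence_eq {R : Type*} [CommSemiring R] {r c : R} {z : ℕ → R} {n : ℕ}
    (hz : ∀ j < n, z (j + 1) = r * z j + c) :
    z n = r ^ n * z 0 + (∑ i ∈ range n, r ^ i) * c := by
  induction n with
  | zero => simp
  | succ n ih =>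
    rw [hz n n.lt_succ_self, ih fun j hj => hz j (by omega), pow_succ, geom_sum_succ]
    ring

theorem affine_recurrence_eq_of_terminal {R : Type*} [CommSemiring R] {r c b : R} {z : ℕ → R}
    {n : ℕ} (hz : ∀ j < n, z (j + 1) = r * z j + c) (hb : b = r * z n + c) :
    b = r ^ (n + 1) * z 0 + (∑ i ∈ range (n + 1), r ^ i) * c := by
  rw [hb, affine_recurrence_eq hz, pow_succ, geom_sum_succ]
  ring

theorem regret_balancing_system_general (s : ℝ) (hs : 2 ≤ s) (k m : ℕ)
    (hm : 1 ≤ m) (x y : ℝ) (z : ℕ → ℝ)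
    (h1 : z 1 = x)
    (h2 : ∀ j : ℕ, 1 ≤ j → j ≤ m - 1 →
      z (j + 1) - s / 2 * z j = x - s * k * y)
    (h3 : 1 - s / 2 * z m = x - s * k * y)
    (h4 : 1 - s * y = x) :
    x = (1 + (∑ i ∈ Finset.range m, (s / 2) ^ i) * k) /
        ((∑ i ∈ Finset.range m, (s / 2) ^ i) * (k + 1) + (s / 2) ^ m) ∧
    (s = 2 → x = (m * k + 1) / (m * (k + 1) + 1)) := by
  obtain ⟨n, rfl⟩ : ∃ n, m = n + 1 := ⟨m - 1, by omega⟩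
  set S := ∑ i ∈ range (n + 1), (s / 2) ^ i with hS
  have balance : 1 = (s / 2) ^ (n + 1) * x + S * (x - s * k * y) := by
    rw [← h1]
    refine affine_recurrence_eq_of_terminal (z := fun j => z (j + 1)) (fun j hj => ?_) (by linarith)
    linarith [h2 (j + 1) (by omega) (by omega)]
  have hden : 0 < S * (k + 1) + (s / 2) ^ (n + 1) := by
    positivity
  have hx : x = (1 + S * k) / (S * (k + 1) + (s / 2) ^ (n + 1)) := by
    rw [eq_div_iff hden.ne']
    linear_combination -S * k * h4 - balance
  refine ⟨hx, fun hs2 => ?_⟩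
  rw [hx, hS, hs2]
  norm_num
  ring

/-- Solution of the regret-balancing linear system of the ICM policy: if
`z 1 = x`, `z (j+1) - (s/2) z j = x - s k y` for `1 ≤ j ≤ m - 1`,
`1 - (s/2) z m = x - s k y` and `1 - s y = x`, then with
`S = ∑_{i=0}^{m-1} (s/2)^i` one has `x = (1 + S k)/(S (k+1) + (s/2)^m)`;
in particular, `x = (mk + 1)/(m(k+1) + 1)` when `s = 2`. -/
theorem regret_balancing_system (s : ℝ) (hs : 2 ≤ s) (k m : ℕ)
    (hk : 1 ≤ k) (hm : 1 ≤ m) (x y : ℝ) (z : ℕ → ℝ)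
    (h1 : z 1 = x)
    (h2 : ∀ j : ℕ, 1 ≤ j → j ≤ m - 1 →
      z (j + 1) - s / 2 * z j = x - s * k * y)
    (h3 : 1 - s / 2 * z m = x - s * k * y)
    (h4 : 1 - s * y = x) :
    x = (1 + (∑ i ∈ Finset.range m, (s / 2) ^ i) * k) /
        ((∑ i ∈ Finset.range m, (s / 2) ^ i) * (k + 1) + (s / 2) ^ m) ∧
    (s = 2 → x = (m * k + 1) / (m * (k + 1) + 1)) :=
  regret_balancing_system_general s hs k m hm x y z h1 h2 h3 h4
end
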